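/- An ABB̄L̄-formula φ is satisfied by some finite interval structure if and only if the formula ξ = φ ∨ ⟨B̄⟩φ ∨ ⟨A⟩φ ∨ ⟨A⟩⟨A⟩φ is featured at the initial point (0,1) of some finite compass ξ-structure of size N ≤ (8|φ| + 15)^(2^(32|φ|+56)) · 2^(32|φ|+56), where |φ| denotes the number of subformulas of φ. -/

import Mathlib

/-!
Reading the atoms of a finite compass structure as a valuation on `Fin N` gives a model (truth
lemma); conversely the types of the intervals of a finite model form a compass structure, and `ξ`
holds on `[0, 1]` as soon as `φ` holds somewhere.

For the bound, attach to each row `y` the number of formulas observed below `y` and below `y + 1`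
and the occurrence counts on row `y` of the atoms, capped at `2|ξ|`. A structure larger than the
number of possible values has, by pigeonhole, two rows `y₀ < y₁` with the same data. Cutting out
the rows `y₀ + 1, …, y₁` and continuing each column `x < y₀` by a column of row `y₁` carrying the
same atom preserves consistency and fulfilment: the capped counts leave room to continue into every
column holding a lowest witness above `y₁`, and the equal counts of observed formulas mean that
whatever is observed up to row `y₁` is already observed below `y₀`, which serves the `L̄`-requests.
Iterating bounds the size.
-/

namespace ABBL

/-- Formulas of the interval temporal logic ABB̄L̄, built from propositional
variables (of type `P`) using negation, disjunction and the unary modal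
operators ⟨A⟩, ⟨B⟩, ⟨B̄⟩, ⟨L̄⟩. -/
inductive Formula (P : Type) : Type
  | atom  : P → Formula P
  | neg   : Formula P → Formula P
  | or    : Formula P → Formula P → Formula P
  | diaA  : Formula P → Formula P
  | diaB  : Formula P → Formula P
  | diaBb : Formula P → Formula P
  | diaLb : Formula P → Formula P

variable {P : Type}

/-- The set of subformulas of a formula. -/
def subf : Formula P → Set (Formula P)
  | .atom a   => {Formula.atom a}
  | .neg ψ    => insert (Formula.neg ψ) (subf ψ)
  | .or ψ χ   => insert (Formula.or ψ χ) (subf ψ ∪ subf χ)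
  | .diaA ψ   => insert (Formula.diaA ψ) (subf ψ)
  | .diaB ψ   => insert (Formula.diaB ψ) (subf ψ)
  | .diaBb ψ  => insert (Formula.diaBb ψ) (subf ψ)
  | .diaLb ψ  => insert (Formula.diaLb ψ) (subf ψ)

/-- The number `|φ|` of subformulas of `φ`. -/
noncomputable def numSub (φ : Formula P) : ℕ := (subf φ).ncard

/-- Negation, identifying `¬¬α` with `α`. -/
def negc : Formula P → Formula P
  | .neg ψ => ψ
  | ψ      => Formula.neg ψ

/-- The closure `Cl(φ)`: all subformulas of `φ` and their negations. -/
def Cl (φ : Formula P) : Set (Formula P) := subf φ ∪ negc '' subf φ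

/-- The extended closure `Cl⁺(φ)`: `Cl(φ)` together with all formulas
`⟨R⟩α` and `¬⟨R⟩α` for `R ∈ {A,B,B̄,L̄}` and `α ∈ Cl(φ)`. -/
def Clp (φ : Formula P) : Set (Formula P) :=
  Cl φ ∪ {ψ | ∃ α ∈ Cl φ,
    ψ = Formula.diaA α ∨ ψ = Formula.neg (Formula.diaA α) ∨
    ψ = Formula.diaB α ∨ ψ = Formula.neg (Formula.diaB α) ∨
    ψ = Formula.diaBb α ∨ ψ = Formula.neg (Formula.diaBb α) ∨
    ψ = Formula.diaLb α ∨ ψ = Formula.neg (Formula.diaLb α)}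

/-- A `φ`-atom: a nonempty, maximal locally consistent subset of `Cl⁺(φ)`. -/
structure IsAtom (φ : Formula P) (F : Set (Formula P)) : Prop where
  nonempty : F.Nonempty
  subset   : F ⊆ Clp φ
  negCond  : ∀ α ∈ Clp φ, (α ∈ F ↔ negc α ∉ F)
  orCond   : ∀ α β, Formula.or α β ∈ Clp φ → (Formula.or α β ∈ F ↔ α ∈ F ∨ β ∈ F)

/-- The observables of `F`: `Obs(F) = F ∩ Cl(φ)`. -/
def Obs (φ : Formula P) (F : Set (Formula P)) : Set (Formula P) := F ∩ Cl φ

/-- The `A`-requests of `F`. -/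
def ReqA (φ : Formula P) (F : Set (Formula P)) : Set (Formula P) :=
  {α | α ∈ Cl φ ∧ Formula.diaA α ∈ F}

/-- The `B`-requests of `F`. -/
def ReqB (φ : Formula P) (F : Set (Formula P)) : Set (Formula P) :=
  {α | α ∈ Cl φ ∧ Formula.diaB α ∈ F}

/-- The `B̄`-requests of `F`. -/
def ReqBb (φ : Formula P) (F : Set (Formula P)) : Set (Formula P) :=
  {α | α ∈ Cl φ ∧ Formula.diaBb α ∈ F}

/-- The `L̄`-requests of `F`. -/
def ReqLb (φ : Formula P) (F : Set (Formula P)) : Set (Formula P) :=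
  {α | α ∈ Cl φ ∧ Formula.diaLb α ∈ F}

/-- The dependency relation `F →_A G`. -/
def DepA (φ : Formula P) (F G : Set (Formula P)) : Prop :=
  ReqA φ F = Obs φ G ∪ ReqB φ G ∪ ReqBb φ G

/-- The dependency relation `F →_B G`. -/
def DepB (φ : Formula P) (F G : Set (Formula P)) : Prop :=
  (Obs φ F ∪ ReqBb φ F ⊆ ReqBb φ G) ∧
  (ReqBb φ G ⊆ Obs φ F ∪ ReqBb φ F ∪ ReqB φ F) ∧
  (Obs φ G ∪ ReqB φ G ⊆ ReqB φ F) ∧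
  (ReqB φ F ⊆ Obs φ G ∪ ReqB φ G ∪ ReqBb φ G) ∧
  ReqLb φ F = ReqLb φ G

/-- The dependency relation `F →_L̄ G`. -/
def DepLb (φ : Formula P) (F G : Set (Formula P)) : Prop :=
  Obs φ G ∪ ReqLb φ G ⊆ ReqLb φ F

/-! ### Interval structures and semantics -/

/-- Intervals `[x,y]` with `x < y` over a linear order `O`. -/
def Interval (O : Type) [LinearOrder O] : Type := {p : O × O // p.1 < p.2}

variable {O : Type} [LinearOrder O]

/-- Allen's "meets" relation: `[x,y] A [x',y']` iff `y = x'`. -/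
def relA (I J : Interval O) : Prop := I.1.2 = J.1.1

/-- Allen's "begins" relation: `[x,y] B [x',y']` iff `x = x'` and `y' < y`. -/
def relB (I J : Interval O) : Prop := I.1.1 = J.1.1 ∧ J.1.2 < I.1.2

/-- Allen's "begun by" relation: `[x,y] B̄ [x',y']` iff `x = x'` and `y < y'`. -/
def relBb (I J : Interval O) : Prop := I.1.1 = J.1.1 ∧ I.1.2 < J.1.2

/-- Allen's "before" relation: `[x,y] L̄ [x',y']` iff `y' < x`. -/
def relLb (I J : Interval O) : Prop := J.1.2 < I.1.1

/-- Satisfaction of a formula at an interval of an interval structure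
`S = (I_O, σ)`, where `σ` is the labeling with sets of propositional variables. -/
def sat (σ : Interval O → Set P) : Formula P → Interval O → Prop
  | .atom a, I  => a ∈ σ I
  | .neg ψ, I   => ¬ sat σ ψ I
  | .or ψ χ, I  => sat σ ψ I ∨ sat σ χ I
  | .diaA ψ, I  => ∃ J, relA I J ∧ sat σ ψ J
  | .diaB ψ, I  => ∃ J, relB I J ∧ sat σ ψ J
  | .diaBb ψ, I => ∃ J, relBb I J ∧ sat σ ψ J
  | .diaLb ψ, I => ∃ J, relLb I J ∧ sat σ ψ J

/-- A linear order is strongly discrete iff there are only finitely many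
points between any two points. -/
def StronglyDiscrete (O : Type) [LinearOrder O] : Prop :=
  ∀ x y : O, (Set.Ioo x y).Finite

/-- The `φ`-type of an interval: the set of formulas of `Cl⁺(φ)` true at it. -/
def TypeS (σ : Interval O → Set P) (φ : Formula P) (I : Interval O) : Set (Formula P) :=
  {α | α ∈ Clp φ ∧ sat σ α I}

/-! ### Compass structures over a linear order -/

/-- A (consistent and fulfilling) compass `φ`-structure over a linear order `O`:
a labeling of the points `(x,y)` with `x < y` (identified with intervals) by
`φ`-atoms, satisfying consistency and fulfillment. -/
structure IsCompass (φ : Formula P) (L : Interval O → Set (Formula P)) : Prop where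
  isAtom : ∀ p, IsAtom φ (L p)
  consA  : ∀ p q, relA p q → DepA φ (L p) (L q)
  consB  : ∀ p q, relB p q → DepB φ (L p) (L q)
  consLb : ∀ p q, relLb p q → DepLb φ (L p) (L q)
  fulA   : ∀ p, ∀ α ∈ ReqA φ (L p), ∃ q, relA p q ∧ α ∈ Obs φ (L q)
  fulB   : ∀ p, ∀ α ∈ ReqB φ (L p), ∃ q, relB p q ∧ α ∈ Obs φ (L q)
  fulBb  : ∀ p, ∀ α ∈ ReqBb φ (L p), ∃ q, relBb p q ∧ α ∈ Obs φ (L q)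
  fulLb  : ∀ p, ∀ α ∈ ReqLb φ (L p), ∃ q, relLb p q ∧ α ∈ Obs φ (L q)

/-! ### Finite compass structures, over `O = {0,…,N−1}` -/

/-- A finite compass structure of size `N` (consistency conditions only):
the points are the pairs `(x,y)` with `x < y < N`, and `L` gives the labeling
by `φ`-atoms. Consistency is required for the relations `A`, `B`, `L̄`. -/
structure IsPreCompass (φ : Formula P) (N : ℕ) (L : ℕ → ℕ → Set (Formula P)) : Prop where
  isAtom : ∀ x y, x < y → y < N → IsAtom φ (L x y)
  consA  : ∀ x y z, x < y → y < z → z < N → DepA φ (L x y) (L y z)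
  consB  : ∀ x z y, x < z → z < y → y < N → DepB φ (L x y) (L x z)
  consLb : ∀ u v x y, u < v → v < x → x < y → y < N → DepLb φ (L x y) (L u v)

/-- A (consistent and fulfilling) finite compass `φ`-structure of size `N`. -/
structure IsFinCompass (φ : Formula P) (N : ℕ) (L : ℕ → ℕ → Set (Formula P))
    extends IsPreCompass φ N L : Prop where
  fulA  : ∀ x y, x < y → y < N → ∀ α ∈ ReqA φ (L x y),
            ∃ z, y < z ∧ z < N ∧ α ∈ Obs φ (L y z)
  fulB  : ∀ x y, x < y → y < N → ∀ α ∈ ReqB φ (L x y),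
            ∃ z, x < z ∧ z < y ∧ α ∈ Obs φ (L x z)
  fulBb : ∀ x y, x < y → y < N → ∀ α ∈ ReqBb φ (L x y),
            ∃ z, y < z ∧ z < N ∧ α ∈ Obs φ (L x z)
  fulLb : ∀ x y, x < y → y < N → ∀ α ∈ ReqLb φ (L x y),
            ∃ u v, u < v ∧ v < x ∧ α ∈ Obs φ (L u v)

/-- The shading of row `y`: the set of atoms occurring on row `y`. -/
def Shading (L : ℕ → ℕ → Set (Formula P)) (y : ℕ) : Set (Set (Formula P)) :=
  {F | ∃ x, x < y ∧ L x y = F}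

/-- The property (WIT) of a set of points `W` being a witness set for row `y`:
every `ψ ∈ Cl(φ)` appearing in the label of a point above row `y` has a witness
in `W` at minimal height above `y`. -/
def WitProp (φ : Formula P) (N : ℕ) (L : ℕ → ℕ → Set (Formula P)) (y : ℕ)
    (W : Set (ℕ × ℕ)) : Prop :=
  (∀ p ∈ W, p.1 < p.2 ∧ p.2 < N ∧ y < p.2) ∧
  ∀ ψ ∈ Cl φ, (∃ x' y', x' < y' ∧ y' < N ∧ y < y' ∧ ψ ∈ L x' y') →
    ∃ p ∈ W, ψ ∈ L p.1 p.2 ∧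
      ∀ x' y', x' < y' → y' < N → y < y' → y' < p.2 → negc ψ ∈ L x' y'

/-- A witness set for row `y`: a minimal set satisfying (WIT). -/
def IsWitSet (φ : Formula P) (N : ℕ) (L : ℕ → ℕ → Set (Formula P)) (y : ℕ)
    (W : Set (ℕ × ℕ)) : Prop :=
  WitProp φ N L y W ∧ ∀ W' ⊆ W, WitProp φ N L y W' → W' = W

/-- `π_ȳ(S)`: the `x`-coordinates, smaller than `ȳ`, of the points in `S`. -/
def proj (ybar : ℕ) (S : Set (ℕ × ℕ)) : Set ℕ := {x | (∃ y, (x, y) ∈ S) ∧ x < ybar}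

/-- Two rows `y0 < y1` of a finite compass structure are compatible. -/
def Compatible (φ : Formula P) (N : ℕ) (L : ℕ → ℕ → Set (Formula P))
    (y0 y1 : ℕ) : Prop :=
  Shading L y0 = Shading L y1 ∧
  L (y0 - 1) y0 = L (y1 - 1) y1 ∧
  ∃ W, IsWitSet φ N L y1 W ∧
    ∃ w : ℕ → ℕ, Set.InjOn w (proj y1 W) ∧
      ∀ x ∈ proj y1 W, w x < y0 ∧ L x y1 = L (w x) y0

/-- `#(F,y)`: the number of points on row `y` labeled by `F`. -/
noncomputable def cnt (L : ℕ → ℕ → Set (Formula P)) (y : ℕ) (F : Set (Formula P)) : ℕ :=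
  Set.ncard {x | x < y ∧ L x y = F}

/-- The characteristic function of row `y`: counts occurrences of each atom,
capped at `2|φ|`. -/
noncomputable def charFn (φ : Formula P) (L : ℕ → ℕ → Set (Formula P)) (y : ℕ)
    (F : Set (Formula P)) : ℕ :=
  min (cnt L y F) (2 * numSub φ)

/-- The formula `ξ = φ ∨ ⟨B̄⟩φ ∨ ⟨A⟩φ ∨ ⟨A⟩⟨A⟩φ`. -/
def xi (φ : Formula P) : Formula P :=
  Formula.or (Formula.or (Formula.or φ (Formula.diaBb φ)) (Formula.diaA φ))
    (Formula.diaA (Formula.diaA φ))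

/-! ### Partially fulfilling structures and compass generators -/

/-- A finite compass structure of size `N` is partially fulfilling: every
request of a point strictly below the top row `N-1` is either fulfilled or
transferred to the border. -/
def PartFulfilling (φ : Formula P) (N : ℕ) (L : ℕ → ℕ → Set (Formula P)) : Prop :=
  ∀ x y, x < y → y < N - 1 →
    (∀ ψ ∈ ReqA φ (L x y),
        (∃ z, y < z ∧ z < N ∧ ψ ∈ Obs φ (L y z)) ∨ ψ ∈ ReqBb φ (L y (N - 1))) ∧
    (∀ ψ ∈ ReqB φ (L x y), ∃ z, x < z ∧ z < y ∧ ψ ∈ Obs φ (L x z)) ∧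
    (∀ ψ ∈ ReqBb φ (L x y),
        (∃ z, y < z ∧ z < N ∧ ψ ∈ Obs φ (L x z)) ∨ ψ ∈ ReqBb φ (L x (N - 1))) ∧
    (∀ ψ ∈ ReqLb φ (L x y),
        (∃ u v, u < v ∧ v < x ∧ ψ ∈ Obs φ (L u v)) ∨ ψ ∈ ReqLb φ (L 0 1))

/-- The defining property of a future witness set for row `y`. -/
def FutWitProp (φ : Formula P) (N : ℕ) (L : ℕ → ℕ → Set (Formula P)) (y : ℕ)
    (FW : Set ℕ) : Prop :=
  (∀ x ∈ FW, x < y) ∧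
  ∀ F ∈ Shading L y, ∃ x ∈ FW, L x y = F ∧
    ∀ ψ ∈ ReqBb φ F, ∃ y', y < y' ∧ y' < N ∧ ψ ∈ Obs φ (L x y')

/-- A future witness set for row `y`: a minimal set satisfying `FutWitProp`. -/
def IsFutWit (φ : Formula P) (N : ℕ) (L : ℕ → ℕ → Set (Formula P)) (y : ℕ)
    (FW : Set ℕ) : Prop :=
  FutWitProp φ N L y FW ∧ ∀ FW' ⊆ FW, FutWitProp φ N L y FW' → FW' = FW

/-- The defining property of a past witness set for row `y`. -/
def PastWitProp (φ : Formula P) (N : ℕ) (L : ℕ → ℕ → Set (Formula P)) (y : ℕ)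
    (PW : Set (ℕ × ℕ)) : Prop :=
  (∀ p ∈ PW, p.1 < p.2 ∧ p.2 < N) ∧
  ∀ ψ ∈ ReqLb φ (L (y - 1) y), ∃ p ∈ PW, ψ ∈ Obs φ (L p.1 p.2) ∧ p.2 < y - 1

/-- A past witness set for row `y`: a minimal set satisfying `PastWitProp`. -/
def IsPastWit (φ : Formula P) (N : ℕ) (L : ℕ → ℕ → Set (Formula P)) (y : ℕ)
    (PW : Set (ℕ × ℕ)) : Prop :=
  PastWitProp φ N L y PW ∧ ∀ PW' ⊆ PW, PastWitProp φ N L y PW' → PW' = PW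

/-- Conditions (G1)–(G6) on the four distinguished rows of a compass generator. -/
structure GenRows (φ : Formula P) (N : ℕ) (L : ℕ → ℕ → Set (Formula P))
    (yφ y0 y1 y2 : ℕ) : Prop where
  rowφpos : 0 < yφ
  rowφlt  : yφ < N
  row0pos : 0 < y0
  row2lt  : y2 < N
  g1a : y0 < y1
  g1b : y1 < y2
  g1c : y0 ≤ yφ
  g2  : φ ∈ L (yφ - 1) yφ ∨ Formula.diaBb φ ∈ L (yφ - 1) yφ
  g3a : Shading L y1 ⊆ Shading L y0
  g3b : L (y0 - 1) y0 = L (y1 - 1) y1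
  g4  : ∃ PW, IsPastWit φ N L y1 PW ∧ ∀ x ∈ proj y1 PW, y0 ≤ x
  g5a : Shading L (N - 1) ⊆ Shading L y2
  g5b : L (y2 - 1) y2 = L (N - 2) (N - 1)
  g6  : ∃ FW, IsFutWit φ N L y2 FW

/-- A compass generator for `φ`: a finite, partially fulfilling compass
structure admitting four rows satisfying (G1)–(G6). -/
structure IsCompassGen (φ : Formula P) (N : ℕ) (L : ℕ → ℕ → Set (Formula P)) : Prop where
  pre     : IsPreCompass φ N L
  partFul : PartFulfilling φ N L
  rows    : ∃ yφ y0 y1 y2, GenRows φ N L yφ y0 y1 y2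

/-- Global compatibility of two rows `y < y'` of a compass generator with
distinguished rows `yφ, y0, y1, y2`. -/
def GlobCompatible (φ : Formula P) (N : ℕ) (L : ℕ → ℕ → Set (Formula P))
    (yφ y0 y1 y2 y y' : ℕ) : Prop :=
  L (y - 1) y = L (y' - 1) y' ∧ Shading L y = Shading L y' ∧
  (∀ ybar ∈ ({yφ, y0, y1, y2} : Set ℕ), ¬ (y ≤ ybar ∧ ybar ≤ y')) ∧
  ∃ PW FW,
    IsPastWit φ N L y1 PW ∧
    (∀ p ∈ PW, ¬ (y ≤ p.2 ∧ p.2 ≤ y')) ∧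
    IsFutWit φ N L y2 FW ∧
    (∀ xbar ∈ FW, ∀ ψ ∈ ReqBb φ (L xbar y2),
      ∃ ybar, y2 < ybar ∧ ybar < N ∧ ψ ∈ Obs φ (L xbar ybar) ∧ ¬ (y ≤ ybar ∧ ybar ≤ y')) ∧
    ∃ W, IsWitSet φ N L y' W ∧
      ∃ w : ℕ → ℕ,
        Set.InjOn w (proj y' (W ∪ PW ∪ (fun x => (x, y2)) '' FW)) ∧
        (∀ x ∈ proj y' (W ∪ PW ∪ (fun x => (x, y2)) '' FW),
          w x < y ∧ L x y' = L (w x) y) ∧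
        (∀ x ∈ proj y' PW, w x = x)


lemma mem_subf_self (φ : Formula P) : φ ∈ subf φ := by
  cases φ <;> simp [subf]

lemma subf_finite (φ : Formula P) : (subf φ).Finite := by
  induction φ with
  | atom a => exact Set.finite_singleton _
  | neg ψ ih | diaA ψ ih | diaB ψ ih | diaBb ψ ih | diaLb ψ ih => exact ih.insert _
  | or ψ χ ih₁ ih₂ => exact (ih₁.union ih₂).insert _

lemma subf_subset_of_mem {φ ψ : Formula P} (h : ψ ∈ subf φ) : subf ψ ⊆ subf φ := by
  induction φ with
  | atom a => rw [Set.mem_singleton_iff.mp h]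
  | neg χ ih | diaA χ ih | diaB χ ih | diaBb χ ih | diaLb χ ih =>
    rcases h with rfl | h
    · exact subset_rfl
    · exact (ih h).trans (Set.subset_insert _ _)
  | or χ χ' ih₁ ih₂ =>
    rcases h with rfl | h | h
    · exact subset_rfl
    · exact (ih₁ h).trans (Set.subset_union_left.trans (Set.subset_insert _ _))
    · exact (ih₂ h).trans (Set.subset_union_right.trans (Set.subset_insert _ _))

lemma mem_subf_of_neg_mem {φ β : Formula P} (h : .neg β ∈ subf φ) : β ∈ subf φ :=
  subf_subset_of_mem h (by simp [subf, mem_subf_self])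

lemma Cl_finite (φ : Formula P) : (Cl φ).Finite :=
  (subf_finite φ).union ((subf_finite φ).image _)

lemma subf_subset_Cl (φ : Formula P) : subf φ ⊆ Cl φ := Set.subset_union_left

lemma Cl_subset_Clp (φ : Formula P) : Cl φ ⊆ Clp φ := Set.subset_union_left

lemma mem_Cl_self (φ : Formula P) : φ ∈ Cl φ := subf_subset_Cl φ (mem_subf_self φ)

lemma mem_Cl_cases {φ α : Formula P} (h : α ∈ Cl φ) :
    α ∈ subf φ ∨ ∃ γ ∈ subf φ, α = .neg γ := by
  rcases h with h | ⟨γ, hγ, rfl⟩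
  · exact .inl h
  · cases γ with
    | neg δ => exact .inl (mem_subf_of_neg_mem hγ)
    | _ => exact .inr ⟨_, hγ, rfl⟩

lemma negc_mem_Cl {φ α : Formula P} (h : α ∈ Cl φ) : negc α ∈ Cl φ := by
  rcases mem_Cl_cases h with h | ⟨γ, hγ, rfl⟩
  · exact .inr ⟨α, h, rfl⟩
  · exact subf_subset_Cl φ hγ

lemma mem_Cl_of_neg_mem {φ β : Formula P} (h : .neg β ∈ Cl φ) : β ∈ Cl φ := by
  simpa [negc] using negc_mem_Cl h

lemma mem_Cl_of_mem_subf_of_mem_Cl {φ α β : Formula P} (hα : α ∈ Cl φ)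
    (hα' : ∀ γ, α ≠ .neg γ) (hβ : β ∈ subf α) : β ∈ Cl φ := by
  rcases mem_Cl_cases hα with h | ⟨γ, -, rfl⟩
  · exact subf_subset_Cl φ (subf_subset_of_mem h hβ)
  · exact absurd rfl (hα' γ)

lemma mem_Cl_of_or_mem {φ β γ : Formula P} (h : .or β γ ∈ Cl φ) : β ∈ Cl φ ∧ γ ∈ Cl φ :=
  ⟨mem_Cl_of_mem_subf_of_mem_Cl h (by simp) (by simp [subf, mem_subf_self]),
    mem_Cl_of_mem_subf_of_mem_Cl h (by simp) (by simp [subf, mem_subf_self])⟩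

lemma mem_Cl_of_diaA_mem {φ β : Formula P} (h : .diaA β ∈ Cl φ) : β ∈ Cl φ :=
  mem_Cl_of_mem_subf_of_mem_Cl h (by simp) (by simp [subf, mem_subf_self])

lemma mem_Cl_of_diaB_mem {φ β : Formula P} (h : .diaB β ∈ Cl φ) : β ∈ Cl φ :=
  mem_Cl_of_mem_subf_of_mem_Cl h (by simp) (by simp [subf, mem_subf_self])

lemma mem_Cl_of_diaBb_mem {φ β : Formula P} (h : .diaBb β ∈ Cl φ) : β ∈ Cl φ :=
  mem_Cl_of_mem_subf_of_mem_Cl h (by simp) (by simp [subf, mem_subf_self])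

lemma mem_Cl_of_diaLb_mem {φ β : Formula P} (h : .diaLb β ∈ Cl φ) : β ∈ Cl φ :=
  mem_Cl_of_mem_subf_of_mem_Cl h (by simp) (by simp [subf, mem_subf_self])

lemma negc_mem_Clp {φ α : Formula P} (h : α ∈ Clp φ) : negc α ∈ Clp φ := by
  rcases h with h | ⟨β, hβ, h | h | h | h | h | h | h | h⟩
  · exact Cl_subset_Clp φ (negc_mem_Cl h)
  all_goals subst h; exact .inr ⟨β, hβ, by simp [negc]⟩

lemma mem_Clp_of_or_mem {φ β γ : Formula P} (h : .or β γ ∈ Clp φ) :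
    β ∈ Clp φ ∧ γ ∈ Clp φ := by
  rcases h with h | ⟨δ, -, h | h | h | h | h | h | h | h⟩
  · exact ⟨Cl_subset_Clp φ (mem_Cl_of_or_mem h).1, Cl_subset_Clp φ (mem_Cl_of_or_mem h).2⟩
  all_goals simp at h

section Semantics

variable {O : Type} [LinearOrder O]

lemma sat_negc (σ : Interval O → Set P) (α : Formula P) (I : Interval O) :
    sat σ (negc α) I ↔ ¬ sat σ α I := by
  cases α <;> simp [negc, sat]

lemma Interval.ext' {I J : Interval O} (h₁ : I.1.1 = J.1.1) (h₂ : I.1.2 = J.1.2) : I = J :=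
  Subtype.ext (Prod.ext h₁ h₂)

def Interval.congr {O' : Type} [LinearOrder O'] (e : O ≃o O') : Interval O ≃ Interval O' where
  toFun I := ⟨(e I.1.1, e I.1.2), e.lt_iff_lt.mpr I.2⟩
  invFun J := ⟨(e.symm J.1.1, e.symm J.1.2), e.symm.lt_iff_lt.mpr J.2⟩
  left_inv I := Interval.ext' (by simp) (by simp)
  right_inv J := Interval.ext' (by simp) (by simp)

lemma sat_xi_of_sat {σ : Interval O → Set P} {φ : Formula P} {a b : O} (hab : a < b)
    (ha : ∀ z, a ≤ z) (hb : ∀ z, a < z → b ≤ z) {I : Interval O} (hI : sat σ φ I) :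
    sat σ (xi φ) ⟨(a, b), hab⟩ := by
  obtain ⟨⟨x, y⟩, hxy⟩ := I
  simp only [xi, sat]
  rcases (ha x).eq_or_lt with rfl | hax
  · rcases (hb y hxy).eq_or_lt with rfl | hby
    · exact .inl (.inl (.inl hI))
    · exact .inl (.inl (.inr ⟨⟨(a, y), hxy⟩, ⟨rfl, hby⟩, hI⟩))
  · rcases (hb x hax).eq_or_lt with rfl | hbx
    · exact .inl (.inr ⟨⟨(b, y), hxy⟩, rfl, hI⟩)
    · exact .inr ⟨⟨(b, x), hbx⟩, rfl, ⟨(x, y), hxy⟩, rfl, hI⟩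

lemma exists_sat_of_sat_xi {σ : Interval O → Set P} {φ : Formula P} {I : Interval O}
    (h : sat σ (xi φ) I) : ∃ J, sat σ φ J := by
  simp only [xi, sat] at h
  rcases h with ((h | ⟨J, -, h⟩) | ⟨J, -, h⟩) | ⟨-, -, J, -, h⟩ <;> exact ⟨_, h⟩

variable {O' : Type} [LinearOrder O'] (e : O ≃o O') (I J : Interval O)

@[simp] lemma Interval.congr_apply_val : (Interval.congr e I).1 = (e I.1.1, e I.1.2) := rfl

@[simp] lemma relA_congr : relA (Interval.congr e I) (Interval.congr e J) ↔ relA I J := by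
  simp [relA]

@[simp] lemma relB_congr : relB (Interval.congr e I) (Interval.congr e J) ↔ relB I J := by
  simp [relB]

@[simp] lemma relBb_congr : relBb (Interval.congr e I) (Interval.congr e J) ↔ relBb I J := by
  simp [relBb]

@[simp] lemma relLb_congr : relLb (Interval.congr e I) (Interval.congr e J) ↔ relLb I J := by
  simp [relLb]

lemma sat_congr (σ : Interval O → Set P) (α : Formula P) :
    sat (σ ∘ (Interval.congr e).symm) α (Interval.congr e I) ↔ sat σ α I := by
  induction α generalizing I with
  | atom a => simp [sat]
  | neg β ih => exact not_congr (ih I)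
  | or β γ ih₁ ih₂ => exact or_congr (ih₁ I) (ih₂ I)
  | diaA β ih | diaB β ih | diaBb β ih | diaLb β ih =>
    exact ((Interval.congr e).exists_congr fun J => by simp [ih]).symm

end Semantics

section Compass

variable {O : Type} [LinearOrder O] {χ : Formula P}

lemma relB_of_relBb {I J : Interval O} (h : relBb I J) : relB J I := ⟨h.1.symm, h.2⟩

lemma eq_or_relB_or_relBb {I K : Interval O} (h : I.1.1 = K.1.1) :
    K = I ∨ relB I K ∨ relBb I K := by
  rcases lt_trichotomy K.1.2 I.1.2 with h' | h' | h'
  · exact .inr (.inl ⟨h, h'⟩)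
  · exact .inl (Interval.ext' h.symm h')
  · exact .inr (.inr ⟨h, h'⟩)

def valuationOf (L : Interval O → Set (Formula P)) : Interval O → Set P :=
  fun I => {a | .atom a ∈ L I}

namespace IsCompass

variable {L : Interval O → Set (Formula P)} {I : Interval O} {β : Formula P}

lemma mem_reqA_iff (hC : IsCompass χ L) :
    β ∈ ReqA χ (L I) ↔ ∃ J, relA I J ∧ β ∈ Obs χ (L J) :=
  ⟨hC.fulA I β, fun ⟨J, hIJ, hβ⟩ => by rw [hC.consA I J hIJ]; exact .inl (.inl hβ)⟩

lemma mem_reqB_iff (hC : IsCompass χ L) :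
    β ∈ ReqB χ (L I) ↔ ∃ J, relB I J ∧ β ∈ Obs χ (L J) :=
  ⟨hC.fulB I β, fun ⟨J, hIJ, hβ⟩ => (hC.consB I J hIJ).2.2.1 (.inl hβ)⟩

lemma mem_reqBb_iff (hC : IsCompass χ L) :
    β ∈ ReqBb χ (L I) ↔ ∃ J, relBb I J ∧ β ∈ Obs χ (L J) :=
  ⟨hC.fulBb I β, fun ⟨J, hIJ, hβ⟩ => (hC.consB J I (relB_of_relBb hIJ)).1 (.inl hβ)⟩

lemma mem_reqLb_iff (hC : IsCompass χ L) :
    β ∈ ReqLb χ (L I) ↔ ∃ J, relLb I J ∧ β ∈ Obs χ (L J) :=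
  ⟨hC.fulLb I β, fun ⟨J, hIJ, hβ⟩ => hC.consLb I J hIJ (.inl hβ)⟩

lemma mem_iff_sat (hC : IsCompass χ L) {α : Formula P} (hα : α ∈ Cl χ) (I : Interval O) :
    α ∈ L I ↔ sat (valuationOf L) α I := by
  have obs_iff {β J} (hβ : β ∈ Cl χ) : β ∈ Obs χ (L J) ↔ β ∈ L J := and_iff_left hβ
  induction α generalizing I with
  | atom a => rfl
  | neg β ih =>
    exact ((hC.isAtom I).negCond _ (Cl_subset_Clp χ hα)).trans
      (not_congr (ih (mem_Cl_of_neg_mem hα) I))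
  | or β γ ih₁ ih₂ =>
    obtain ⟨hβ, hγ⟩ := mem_Cl_of_or_mem hα
    exact ((hC.isAtom I).orCond β γ (Cl_subset_Clp χ hα)).trans (or_congr (ih₁ hβ I) (ih₂ hγ I))
  | diaA β ih =>
    have hβ := mem_Cl_of_diaA_mem hα
    exact (and_iff_right hβ).symm.trans (hC.mem_reqA_iff.trans
      (exists_congr fun J => and_congr_right fun _ => (obs_iff hβ).trans (ih hβ J)))
  | diaB β ih =>
    have hβ := mem_Cl_of_diaB_mem hα
    exact (and_iff_right hβ).symm.trans (hC.mem_reqB_iff.trans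
      (exists_congr fun J => and_congr_right fun _ => (obs_iff hβ).trans (ih hβ J)))
  | diaBb β ih =>
    have hβ := mem_Cl_of_diaBb_mem hα
    exact (and_iff_right hβ).symm.trans (hC.mem_reqBb_iff.trans
      (exists_congr fun J => and_congr_right fun _ => (obs_iff hβ).trans (ih hβ J)))
  | diaLb β ih =>
    have hβ := mem_Cl_of_diaLb_mem hα
    exact (and_iff_right hβ).symm.trans (hC.mem_reqLb_iff.trans
      (exists_congr fun J => and_congr_right fun _ => (obs_iff hβ).trans (ih hβ J)))

end IsCompass
end Compass

section Types

variable {O : Type} [LinearOrder O] (σ : Interval O → Set P) (χ : Formula P)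
  {I : Interval O} {α : Formula P}

lemma mem_obs_typeS : α ∈ Obs χ (TypeS σ χ I) ↔ α ∈ Cl χ ∧ sat σ α I :=
  ⟨fun h => ⟨h.2, h.1.2⟩, fun h => ⟨⟨Cl_subset_Clp χ h.1, h.2⟩, h.1⟩⟩

lemma mem_reqA_typeS : α ∈ ReqA χ (TypeS σ χ I) ↔ α ∈ Cl χ ∧ ∃ J, relA I J ∧ sat σ α J :=
  ⟨fun h => ⟨h.1, h.2.2⟩, fun h => ⟨h.1, .inr ⟨α, h.1, by simp⟩, h.2⟩⟩

lemma mem_reqB_typeS : α ∈ ReqB χ (TypeS σ χ I) ↔ α ∈ Cl χ ∧ ∃ J, relB I J ∧ sat σ α J :=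
  ⟨fun h => ⟨h.1, h.2.2⟩, fun h => ⟨h.1, .inr ⟨α, h.1, by simp⟩, h.2⟩⟩

lemma mem_reqBb_typeS : α ∈ ReqBb χ (TypeS σ χ I) ↔ α ∈ Cl χ ∧ ∃ J, relBb I J ∧ sat σ α J :=
  ⟨fun h => ⟨h.1, h.2.2⟩, fun h => ⟨h.1, .inr ⟨α, h.1, by simp⟩, h.2⟩⟩

lemma mem_reqLb_typeS : α ∈ ReqLb χ (TypeS σ χ I) ↔ α ∈ Cl χ ∧ ∃ J, relLb I J ∧ sat σ α J :=
  ⟨fun h => ⟨h.1, h.2.2⟩, fun h => ⟨h.1, .inr ⟨α, h.1, by simp⟩, h.2⟩⟩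

lemma isAtom_typeS : IsAtom χ (TypeS σ χ I) where
  nonempty := by
    by_cases hs : sat σ χ I
    · exact ⟨χ, Cl_subset_Clp χ (mem_Cl_self χ), hs⟩
    · exact ⟨negc χ, negc_mem_Clp (Cl_subset_Clp χ (mem_Cl_self χ)), (sat_negc σ χ I).mpr hs⟩
  subset _ h := h.1
  negCond α hα := by
    simp only [TypeS, Set.mem_ofPred_eq, hα, negc_mem_Clp hα, true_and, sat_negc, not_not]
  orCond α β h := by
    simp only [TypeS, Set.mem_ofPred_eq, h, (mem_Clp_of_or_mem h).1, (mem_Clp_of_or_mem h).2,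
      true_and, sat]

lemma isCompass_typeS : IsCompass χ (TypeS σ χ) where
  isAtom _ := isAtom_typeS σ χ
  consA I J hIJ := by
    ext α
    simp only [Set.mem_union, mem_reqA_typeS, mem_obs_typeS, mem_reqB_typeS, mem_reqBb_typeS]
    constructor
    · rintro ⟨hα, K, hIK, hK⟩
      rcases eq_or_relB_or_relBb (hIJ.symm.trans hIK) with rfl | h | h
      · exact .inl (.inl ⟨hα, hK⟩)
      · exact .inl (.inr ⟨hα, K, h, hK⟩)
      · exact .inr ⟨hα, K, h, hK⟩
    · rintro ((⟨hα, hJ⟩ | ⟨hα, K, hJK, hK⟩) | ⟨hα, K, hJK, hK⟩)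
      exacts [⟨hα, J, hIJ, hJ⟩, ⟨hα, K, hIJ.trans hJK.1, hK⟩, ⟨hα, K, hIJ.trans hJK.1, hK⟩]
  consB I J hIJ := by
    refine ⟨?_, ?_, ?_, ?_, Set.ext fun α => by simp only [mem_reqLb_typeS, relLb, hIJ.1]⟩ <;>
      intro α <;>
      simp only [Set.mem_union, mem_obs_typeS, mem_reqB_typeS, mem_reqBb_typeS]
    · rintro (⟨hα, hI⟩ | ⟨hα, K, hIK, hK⟩)
      exacts [⟨hα, I, ⟨hIJ.1.symm, hIJ.2⟩, hI⟩,
        ⟨hα, K, ⟨hIJ.1.symm.trans hIK.1, hIJ.2.trans hIK.2⟩, hK⟩]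
    · rintro ⟨hα, K, hJK, hK⟩
      rcases eq_or_relB_or_relBb (hIJ.1.trans hJK.1) with rfl | h | h
      exacts [.inl (.inl ⟨hα, hK⟩), .inr ⟨hα, K, h, hK⟩, .inl (.inr ⟨hα, K, h, hK⟩)]
    · rintro (⟨hα, hJ⟩ | ⟨hα, K, hJK, hK⟩)
      exacts [⟨hα, J, hIJ, hJ⟩, ⟨hα, K, ⟨hIJ.1.trans hJK.1, hJK.2.trans hIJ.2⟩, hK⟩]
    · rintro ⟨hα, K, hIK, hK⟩
      rcases eq_or_relB_or_relBb (hIJ.1.symm.trans hIK.1) with rfl | h | h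
      exacts [.inl (.inl ⟨hα, hK⟩), .inl (.inr ⟨hα, K, h, hK⟩), .inr ⟨hα, K, h, hK⟩]
  consLb I J hIJ := by
    rintro α (h | h)
    · exact (mem_reqLb_typeS σ χ).mpr ⟨h.2, J, hIJ, h.1.2⟩
    · obtain ⟨hα, K, hJK, hK⟩ := (mem_reqLb_typeS σ χ).mp h
      exact (mem_reqLb_typeS σ χ).mpr ⟨hα, K, hJK.trans (J.2.trans hIJ), hK⟩
  fulA I α h := by
    obtain ⟨hα, J, hIJ, hJ⟩ := (mem_reqA_typeS σ χ).mp h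
    exact ⟨J, hIJ, (mem_obs_typeS σ χ).mpr ⟨hα, hJ⟩⟩
  fulB I α h := by
    obtain ⟨hα, J, hIJ, hJ⟩ := (mem_reqB_typeS σ χ).mp h
    exact ⟨J, hIJ, (mem_obs_typeS σ χ).mpr ⟨hα, hJ⟩⟩
  fulBb I α h := by
    obtain ⟨hα, J, hIJ, hJ⟩ := (mem_reqBb_typeS σ χ).mp h
    exact ⟨J, hIJ, (mem_obs_typeS σ χ).mpr ⟨hα, hJ⟩⟩
  fulLb I α h := by
    obtain ⟨hα, J, hIJ, hJ⟩ := (mem_reqLb_typeS σ χ).mp h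
    exact ⟨J, hIJ, (mem_obs_typeS σ χ).mpr ⟨hα, hJ⟩⟩

end Types

section FinCompass

variable {χ : Formula P} {N : ℕ} {L : ℕ → ℕ → Set (Formula P)}

def finInterval {N : ℕ} (x y : ℕ) (hxy : x < y) (hy : y < N) : Interval (Fin N) :=
  ⟨(⟨x, hxy.trans hy⟩, ⟨y, hy⟩), hxy⟩

def labelOnFin (N : ℕ) (L : ℕ → ℕ → Set (Formula P)) (I : Interval (Fin N)) :
    Set (Formula P) :=
  L I.1.1 I.1.2

lemma IsFinCompass.isCompass (hC : IsFinCompass χ N L) : IsCompass χ (labelOnFin N L) where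
  isAtom I := hC.isAtom _ _ I.2 I.1.2.2
  consA := by
    rintro ⟨⟨⟨x, _⟩, ⟨y, _⟩⟩, hxy⟩ ⟨⟨⟨y', _⟩, ⟨z, hz⟩⟩, hyz⟩ ⟨⟩
    exact hC.consA x y z hxy hyz hz
  consB := by
    rintro ⟨⟨⟨x, _⟩, ⟨y, hy⟩⟩, hxy⟩ ⟨⟨⟨x', _⟩, ⟨z, _⟩⟩, hxz⟩ ⟨⟨⟩, hzy⟩
    exact hC.consB x z y hxz hzy hy
  consLb := by
    rintro ⟨⟨⟨x, _⟩, ⟨y, hy⟩⟩, hxy⟩ ⟨⟨⟨u, _⟩, ⟨v, _⟩⟩, huv⟩ hvx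
    exact hC.consLb u v x y huv hvx hxy hy
  fulA := by
    rintro ⟨⟨⟨x, _⟩, ⟨y, hy⟩⟩, hxy⟩ α hα
    obtain ⟨z, hyz, hz, hαz⟩ := hC.fulA x y hxy hy α hα
    exact ⟨finInterval y z hyz hz, rfl, hαz⟩
  fulB := by
    rintro ⟨⟨⟨x, _⟩, ⟨y, hy⟩⟩, hxy⟩ α hα
    obtain ⟨z, hxz, hzy, hαz⟩ := hC.fulB x y hxy hy α hα
    exact ⟨finInterval x z hxz (hzy.trans hy), ⟨rfl, hzy⟩, hαz⟩
  fulBb := by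
    rintro ⟨⟨⟨x, _⟩, ⟨y, hy⟩⟩, hxy⟩ α hα
    obtain ⟨z, hyz, hz, hαz⟩ := hC.fulBb x y hxy hy α hα
    exact ⟨finInterval x z (Nat.lt_trans hxy hyz) hz, ⟨rfl, hyz⟩, hαz⟩
  fulLb := by
    rintro ⟨⟨⟨x, _⟩, ⟨y, hy⟩⟩, hxy⟩ α hα
    obtain ⟨u, v, huv, hvx, hαv⟩ := hC.fulLb x y hxy hy α hα
    exact ⟨finInterval u v huv (hvx.trans (Nat.lt_trans hxy hy)), hvx, hαv⟩

lemma IsCompass.isFinCompass (hC : IsCompass χ (labelOnFin N L)) : IsFinCompass χ N L where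
  isAtom x y hxy hy := hC.isAtom (finInterval x y hxy hy)
  consA x y z hxy hyz hz :=
    hC.consA (finInterval x y hxy (hyz.trans hz)) (finInterval y z hyz hz) rfl
  consB x z y hxz hzy hy :=
    hC.consB (finInterval x y (hxz.trans hzy) hy) (finInterval x z hxz (hzy.trans hy)) ⟨rfl, hzy⟩
  consLb u v x y huv hvx hxy hy :=
    hC.consLb (finInterval x y hxy hy) (finInterval u v huv (hvx.trans (hxy.trans hy))) hvx
  fulA x y hxy hy α hα := by
    obtain ⟨⟨⟨⟨y', _⟩, ⟨z, hz⟩⟩, hyz⟩, ⟨⟩, hαz⟩ := hC.fulA (finInterval x y hxy hy) α hα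
    exact ⟨z, hyz, hz, hαz⟩
  fulB x y hxy hy α hα := by
    obtain ⟨⟨⟨⟨x', _⟩, ⟨z, _⟩⟩, hxz⟩, ⟨⟨⟩, hzy⟩, hαz⟩ := hC.fulB (finInterval x y hxy hy) α hα
    exact ⟨z, hxz, hzy, hαz⟩
  fulBb x y hxy hy α hα := by
    obtain ⟨⟨⟨⟨x', _⟩, ⟨z, hz⟩⟩, _⟩, ⟨⟨⟩, hyz⟩, hαz⟩ := hC.fulBb (finInterval x y hxy hy) α hα
    exact ⟨z, hyz, hz, hαz⟩
  fulLb x y hxy hy α hα := by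
    obtain ⟨⟨⟨⟨u, _⟩, ⟨v, _⟩⟩, huv⟩, hvx, hαv⟩ := hC.fulLb (finInterval x y hxy hy) α hα
    exact ⟨u, v, huv, hvx, hαv⟩

end FinCompass

section Models

variable {φ : Formula P}

lemma exists_sat_of_isFinCompass {N : ℕ} {L : ℕ → ℕ → Set (Formula P)} (hN : 1 < N)
    (hC : IsFinCompass (xi φ) N L) (hξ : xi φ ∈ L 0 1) :
    ∃ (O : Type) (_ : LinearOrder O) (_ : Finite O) (σ : Interval O → Set P) (I : Interval O),
      sat σ φ I := by
  have hξ' := (hC.isCompass.mem_iff_sat (mem_Cl_self _) (finInterval 0 1 one_pos hN)).mp hξ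
  obtain ⟨J, hJ⟩ := exists_sat_of_sat_xi hξ'
  exact ⟨Fin N, inferInstance, inferInstance, _, J, hJ⟩

lemma exists_isFinCompass_of_sat {O : Type} [LinearOrder O] [Finite O] {σ : Interval O → Set P}
    {I : Interval O} (hI : sat σ φ I) :
    ∃ N L, 1 < N ∧ IsFinCompass (xi φ) N L ∧ xi φ ∈ L 0 1 := by
  have := Fintype.ofFinite O
  let e : O ≃o Fin (Fintype.card O) := (monoEquivOfFin O rfl).symm
  set N := Fintype.card O
  set σ' := σ ∘ (Interval.congr e).symm
  have hI' : sat σ' φ (Interval.congr e I) := (sat_congr e I σ φ).mpr hI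
  have hN : 1 < N := by
    have : (e I.1.1).val < e I.1.2 := e.lt_iff_lt.mpr I.2
    have := (e I.1.2).2
    omega
  let L x y := if h : x < y ∧ y < N then TypeS σ' (xi φ) (finInterval x y h.1 h.2) else ∅
  have hL : labelOnFin N L = TypeS σ' (xi φ) := funext fun J => dif_pos ⟨J.2, J.1.2.2⟩
  refine ⟨N, L, hN, IsCompass.isFinCompass (hL ▸ isCompass_typeS σ' (xi φ)), ?_⟩
  show xi φ ∈ labelOnFin N L (finInterval 0 1 one_pos hN)
  rw [hL]
  exact ⟨Cl_subset_Clp _ (mem_Cl_self _),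
    sat_xi_of_sat _ (fun z => Nat.zero_le z.val) (fun _ h => h) hI'⟩

end Models

section Contraction

variable {χ : Formula P} {N : ℕ} {L : ℕ → ℕ → Set (Formula P)} {F G H : Set (Formula P)}

lemma DepB.trans (h₁ : DepB χ F G) (h₂ : DepB χ G H) : DepB χ F H := by
  obtain ⟨a₁, a₂, a₃, a₄, a₅⟩ := h₁
  obtain ⟨b₁, b₂, b₃, b₄, b₅⟩ := h₂
  refine ⟨fun α hα => b₁ (.inr (a₁ hα)), fun α hα => ?_, fun α hα => a₃ (.inr (b₃ hα)),
    fun α hα => ?_, a₅.trans b₅⟩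
  · rcases b₂ hα with (h | h) | h
    exacts [.inr (a₃ (.inl h)), a₂ h, .inr (a₃ (.inr h))]
  · rcases a₄ hα with (h | h) | h
    exacts [.inr (b₁ (.inl h)), b₄ h, .inr (b₁ (.inr h))]

lemma DepB.obs_union_eq (h : DepB χ F G) :
    Obs χ F ∪ ReqB χ F ∪ ReqBb χ F = Obs χ G ∪ ReqB χ G ∪ ReqBb χ G := by
  obtain ⟨a₁, a₂, a₃, a₄, -⟩ := h
  ext α
  constructor
  · rintro ((h | h) | h)
    exacts [.inr (a₁ (.inl h)), a₄ h, .inr (a₁ (.inr h))]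
  · rintro ((h | h) | h)
    · exact .inl (.inr (a₃ (.inl h)))
    · exact .inl (.inr (a₃ (.inr h)))
    · rcases a₂ h with (h | h) | h
      exacts [.inl (.inl h), .inr h, .inl (.inr h)]

lemma DepB.reqLb_eq (h : DepB χ F G) : ReqLb χ F = ReqLb χ G := h.2.2.2.2

variable {y₀ y₁ : ℕ} {f : ℕ → ℕ}

/-- Rows `y₀ < y₁` between which a finite compass structure can be cut, the columns `x < y₀`
being continued above `y₀` by the columns `f x`. -/
structure IsContractible (χ : Formula P) (N : ℕ) (L : ℕ → ℕ → Set (Formula P)) (y₀ y₁ : ℕ)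
    (f : ℕ → ℕ) : Prop where
  compass : IsFinCompass χ N L
  lt : y₀ < y₁
  lt_N : y₁ < N
  col : ∀ x < y₀, f x < y₁ ∧ L (f x) y₁ = L x y₀
  past : ∀ ψ u v, u < v → v ≤ y₁ → ψ ∈ Obs χ (L u v) →
    ∃ u' v', u' < v' ∧ v' < y₀ ∧ ψ ∈ Obs χ (L u' v')
  future : ∀ ψ u v, u < v → y₁ < v → ψ ∈ Obs χ (L u v) →
    ∃ u' v', u' < v' ∧ y₁ < v' ∧ v' ≤ v ∧ ψ ∈ Obs χ (L u' v') ∧ (y₁ ≤ u' ∨ ∃ x < y₀, f x = u')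

def contractCol (y₀ y₁ : ℕ) (f : ℕ → ℕ) (x : ℕ) : ℕ :=
  if x < y₀ then f x else x + (y₁ - y₀)

/-- The structure obtained by removing the rows `y₀ + 1, …, y₁`. -/
def contract (L : ℕ → ℕ → Set (Formula P)) (y₀ y₁ : ℕ) (f : ℕ → ℕ) (x y : ℕ) : Set (Formula P) :=
  if y ≤ y₀ then L x y else L (contractCol y₀ y₁ f x) (y + (y₁ - y₀))

variable {x y : ℕ}

lemma contractCol_of_lt (hx : x < y₀) : contractCol y₀ y₁ f x = f x := if_pos hx

lemma contractCol_of_le (hx : y₀ ≤ x) : contractCol y₀ y₁ f x = x + (y₁ - y₀) :=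
  if_neg hx.not_gt

lemma contract_of_le (hy : y ≤ y₀) : contract L y₀ y₁ f x y = L x y := if_pos hy

namespace IsContractible

lemma contract_eq (h : IsContractible χ N L y₀ y₁ f) (hxy : x < y) (hy : y₀ ≤ y) :
    contract L y₀ y₁ f x y = L (contractCol y₀ y₁ f x) (y + (y₁ - y₀)) := by
  rcases hy.eq_or_lt with rfl | hy
  · rw [contract_of_le le_rfl, contractCol_of_lt hxy, Nat.add_sub_cancel' h.lt.le, (h.col x hxy).2]
  · exact if_neg hy.not_ge

lemma contractCol_lt (h : IsContractible χ N L y₀ y₁ f) (hxy : x < y) (hy : y₀ ≤ y) :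
    contractCol y₀ y₁ f x < y + (y₁ - y₀) := by
  rcases lt_or_ge x y₀ with hx | hx
  · rw [contractCol_of_lt hx]; have := (h.col x hx).1; omega
  · rw [contractCol_of_le hx]; omega

lemma isPreCompass (h : IsContractible χ N L y₀ y₁ f) :
    IsPreCompass χ (N - (y₁ - y₀)) (contract L y₀ y₁ f) where
  isAtom x y hxy hy := by
    rcases le_or_gt y y₀ with hy₀ | hy₀
    · rw [contract_of_le hy₀]
      exact h.compass.isAtom x y hxy (by omega)
    · rw [h.contract_eq hxy hy₀.le]
      exact h.compass.isAtom _ _ (h.contractCol_lt hxy hy₀.le) (by omega)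
  consA x y z hxy hyz hz := by
    have hC := h.compass
    rcases le_or_gt z y₀ with hz₀ | hz₀
    · rw [contract_of_le hz₀, contract_of_le (by omega)]
      exact hC.consA x y z hxy hyz (by omega)
    rw [h.contract_eq hyz hz₀.le]
    rcases lt_or_ge y y₀ with hy₀ | hy₀
    · obtain ⟨hfy, hLfy⟩ := h.col y hy₀
      rw [contract_of_le hy₀.le, contractCol_of_lt hy₀, DepA, hC.consA x y y₀ hxy hy₀ (by omega),
        ← hLfy]
      exact (hC.consB _ y₁ _ hfy (by omega) (by omega)).obs_union_eq.symm
    · rw [h.contract_eq hxy hy₀, contractCol_of_le hy₀]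
      exact hC.consA _ _ _ (h.contractCol_lt hxy hy₀) (by omega) (by omega)
  consB x z y hxz hzy hy := by
    have hC := h.compass
    rcases le_or_gt y y₀ with hy₀ | hy₀
    · rw [contract_of_le hy₀, contract_of_le (by omega)]
      exact hC.consB x z y hxz hzy (by omega)
    rw [h.contract_eq (hxz.trans hzy) hy₀.le]
    rcases lt_or_ge z y₀ with hz₀ | hz₀
    · have hx₀ : x < y₀ := hxz.trans hz₀
      obtain ⟨hfx, hLfx⟩ := h.col x hx₀
      have hDep := hC.consB (f x) y₁ (y + (y₁ - y₀)) hfx (by omega) (by omega)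
      rw [hLfx] at hDep
      rw [contract_of_le hz₀.le, contractCol_of_lt hx₀]
      exact hDep.trans (hC.consB x z y₀ hxz hz₀ (by omega))
    · rw [h.contract_eq hxz hz₀]
      exact hC.consB _ _ _ (h.contractCol_lt hxz hz₀) (by omega) (by omega)
  consLb u v x y huv hvx hxy hy := by
    have hC := h.compass
    rcases le_or_gt y y₀ with hy₀ | hy₀
    · rw [contract_of_le hy₀, contract_of_le (by omega)]
      exact hC.consLb u v x y huv hvx hxy (by omega)
    rw [h.contract_eq hxy hy₀.le]
    rcases lt_or_ge v y₀ with hv₀ | hv₀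
    · rw [contract_of_le hv₀.le]
      rcases lt_or_ge x y₀ with hx₀ | hx₀
      · obtain ⟨hfx, hLfx⟩ := h.col x hx₀
        rw [contractCol_of_lt hx₀, DepLb,
          (hC.consB (f x) y₁ (y + (y₁ - y₀)) hfx (by omega) (by omega)).reqLb_eq, hLfx]
        exact hC.consLb u v x y₀ huv hvx hx₀ (by omega)
      · rw [contractCol_of_le hx₀]
        exact hC.consLb u v _ _ huv (by omega) (by omega) (by omega)
    · rw [h.contract_eq huv hv₀, contractCol_of_le (by omega : y₀ ≤ x)]
      exact hC.consLb _ _ _ _ (h.contractCol_lt huv hv₀) (by omega) (by omega) (by omega)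

variable {α : Formula P}

lemma fulA (h : IsContractible χ N L y₀ y₁ f) (hxy : x < y) (hy : y < N - (y₁ - y₀))
    (hα : α ∈ ReqA χ (contract L y₀ y₁ f x y)) :
    ∃ z, y < z ∧ z < N - (y₁ - y₀) ∧ α ∈ Obs χ (contract L y₀ y₁ f y z) := by
  have hC := h.compass
  have := h.lt
  have := h.lt_N
  rcases lt_or_ge y y₀ with hy₀ | hy₀
  · rw [contract_of_le hy₀.le, hC.consA x y y₀ hxy hy₀ (by omega)] at hα
    rcases hα with (hα | hα) | hα
    · exact ⟨y₀, hy₀, by omega, by rwa [contract_of_le le_rfl]⟩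
    · obtain ⟨z, hyz, hz, hαz⟩ := hC.fulB y y₀ hy₀ (by omega) α hα
      exact ⟨z, hyz, by omega, by rwa [contract_of_le hz.le]⟩
    · obtain ⟨hfy, hLfy⟩ := h.col y hy₀
      rw [← hLfy] at hα
      obtain ⟨z, hz₁, hz, hαz⟩ := hC.fulBb (f y) y₁ hfy h.lt_N α hα
      refine ⟨z - (y₁ - y₀), by omega, by omega, ?_⟩
      rwa [h.contract_eq (by omega) (by omega), contractCol_of_lt hy₀,
        Nat.sub_add_cancel (by omega)]
  · rw [h.contract_eq hxy hy₀] at hα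
    obtain ⟨z, hyz, hz, hαz⟩ := hC.fulA _ _ (h.contractCol_lt hxy hy₀) (by omega) α hα
    refine ⟨z - (y₁ - y₀), by omega, by omega, ?_⟩
    rwa [h.contract_eq (by omega) (by omega), contractCol_of_le hy₀, Nat.sub_add_cancel (by omega)]

lemma fulB (h : IsContractible χ N L y₀ y₁ f) (hxy : x < y) (hy : y < N - (y₁ - y₀))
    (hα : α ∈ ReqB χ (contract L y₀ y₁ f x y)) :
    ∃ z, x < z ∧ z < y ∧ α ∈ Obs χ (contract L y₀ y₁ f x z) := by
  have hC := h.compass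
  have := h.lt
  have := h.lt_N
  rcases le_or_gt y y₀ with hy₀ | hy₀
  · rw [contract_of_le hy₀] at hα
    obtain ⟨z, hxz, hzy, hαz⟩ := hC.fulB x y hxy (by omega) α hα
    exact ⟨z, hxz, hzy, by rwa [contract_of_le (by omega)]⟩
  rw [h.contract_eq hxy hy₀.le] at hα
  obtain ⟨z, hxz, hzy, hαz⟩ := hC.fulB _ _ (h.contractCol_lt hxy hy₀.le) (by omega) α hα
  rcases lt_or_ge y₁ z with hz₁ | hz₁
  · have hxz' : x < z - (y₁ - y₀) := by
      rcases lt_or_ge x y₀ with hx₀ | hx₀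
      · omega
      · rw [contractCol_of_le hx₀] at hxz; omega
    refine ⟨z - (y₁ - y₀), hxz', by omega, ?_⟩
    rwa [h.contract_eq hxz' (by omega), Nat.sub_add_cancel (by omega)]
  have hx₀ : x < y₀ := by
    by_contra! hx₀
    rw [contractCol_of_le hx₀] at hxz
    omega
  obtain ⟨hfx, hLfx⟩ := h.col x hx₀
  rw [contractCol_of_lt hx₀] at hxz hαz
  have hα₀ : α ∈ Obs χ (L x y₀) ∪ ReqB χ (L x y₀) := by
    rw [← hLfx]
    rcases hz₁.eq_or_lt with rfl | hz₁
    · exact .inl hαz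
    · exact .inr ((hC.consB _ z y₁ hxz hz₁ (by omega)).2.2.1 (.inl hαz))
  rcases hα₀ with hα₀ | hα₀
  · exact ⟨y₀, hx₀, hy₀, by rwa [contract_of_le le_rfl]⟩
  · obtain ⟨z', hxz', hz', hαz'⟩ := hC.fulB x y₀ hx₀ (by omega) α hα₀
    exact ⟨z', hxz', by omega, by rwa [contract_of_le hz'.le]⟩

lemma fulBb (h : IsContractible χ N L y₀ y₁ f) (hxy : x < y) (hy : y < N - (y₁ - y₀))
    (hα : α ∈ ReqBb χ (contract L y₀ y₁ f x y)) :
    ∃ z, y < z ∧ z < N - (y₁ - y₀) ∧ α ∈ Obs χ (contract L y₀ y₁ f x z) := by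
  have hC := h.compass
  have := h.lt
  have := h.lt_N
  rcases lt_or_ge y₀ y with hy₀ | hy₀
  · rw [h.contract_eq hxy hy₀.le] at hα
    obtain ⟨z, hyz, hz, hαz⟩ := hC.fulBb _ _ (h.contractCol_lt hxy hy₀.le) (by omega) α hα
    refine ⟨z - (y₁ - y₀), by omega, by omega, ?_⟩
    rwa [h.contract_eq (by omega) (by omega), Nat.sub_add_cancel (by omega)]
  rw [contract_of_le hy₀] at hα
  obtain ⟨z, hyz, hz, hαz⟩ := hC.fulBb x y hxy (by omega) α hα
  rcases le_or_gt z y₀ with hz₀ | hz₀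
  · exact ⟨z, hyz, by omega, by rwa [contract_of_le hz₀]⟩
  -- a witness beyond the cut: pass the request to row `y₁` along column `f x`
  have hx₀ : x < y₀ := by omega
  obtain ⟨hfx, hLfx⟩ := h.col x hx₀
  have hα₁ : α ∈ ReqBb χ (L (f x) y₁) := hLfx ▸ (hC.consB x y₀ z hx₀ hz₀ hz).1 (.inl hαz)
  obtain ⟨z', hz'₁, hz', hαz'⟩ := hC.fulBb (f x) y₁ hfx h.lt_N α hα₁
  refine ⟨z' - (y₁ - y₀), by omega, by omega, ?_⟩
  rwa [h.contract_eq (by omega) (by omega), contractCol_of_lt hx₀, Nat.sub_add_cancel (by omega)]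

lemma fulLb (h : IsContractible χ N L y₀ y₁ f) (hxy : x < y) (hy : y < N - (y₁ - y₀))
    (hα : α ∈ ReqLb χ (contract L y₀ y₁ f x y)) :
    ∃ u v, u < v ∧ v < x ∧ α ∈ Obs χ (contract L y₀ y₁ f u v) := by
  have hC := h.compass
  have := h.lt
  have := h.lt_N
  rcases le_or_gt y y₀ with hy₀ | hy₀
  · rw [contract_of_le hy₀] at hα
    obtain ⟨u, v, huv, hvx, hαv⟩ := hC.fulLb x y hxy (by omega) α hα
    exact ⟨u, v, huv, hvx, by rwa [contract_of_le (by omega)]⟩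
  rw [h.contract_eq hxy hy₀.le] at hα
  rcases lt_or_ge x y₀ with hx₀ | hx₀
  · obtain ⟨hfx, hLfx⟩ := h.col x hx₀
    rw [contractCol_of_lt hx₀, (hC.consB (f x) y₁ _ hfx (by omega) (by omega)).reqLb_eq,
      hLfx] at hα
    obtain ⟨u, v, huv, hvx, hαv⟩ := hC.fulLb x y₀ hx₀ (by omega) α hα
    exact ⟨u, v, huv, hvx, by rwa [contract_of_le (by omega)]⟩
  rw [contractCol_of_le hx₀] at hα
  obtain ⟨u, v, huv, hvx, hαv⟩ := hC.fulLb _ _ (by omega) (by omega) α hα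
  rcases le_or_gt v y₁ with hv₁ | hv₁
  · obtain ⟨u', v', hu'v', hv', hαv'⟩ := h.past α u v huv hv₁ hαv
    exact ⟨u', v', hu'v', by omega, by rwa [contract_of_le (by omega)]⟩
  obtain ⟨u', v', hu'v', hv'₁, hv'v, hαv', hu'⟩ := h.future α u v huv hv₁ hαv
  obtain ⟨u'', hu'', hu''v⟩ : ∃ u'', contractCol y₀ y₁ f u'' = u' ∧ u'' < v' - (y₁ - y₀) := by
    rcases hu' with hu' | ⟨x', hx', rfl⟩
    · exact ⟨u' - (y₁ - y₀), by rw [contractCol_of_le (by omega)]; omega, by omega⟩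
    · exact ⟨x', contractCol_of_lt hx', by omega⟩
  refine ⟨u'', v' - (y₁ - y₀), hu''v, by omega, ?_⟩
  rwa [h.contract_eq hu''v (by omega), hu'', Nat.sub_add_cancel (by omega)]

theorem isFinCompass (h : IsContractible χ N L y₀ y₁ f) :
    IsFinCompass χ (N - (y₁ - y₀)) (contract L y₀ y₁ f) where
  toIsPreCompass := h.isPreCompass
  fulA _ _ hxy hy _ hα := h.fulA hxy hy hα
  fulB _ _ hxy hy _ hα := h.fulB hxy hy hα
  fulBb _ _ hxy hy _ hα := h.fulBb hxy hy hα
  fulLb _ _ hxy hy _ hα := h.fulLb hxy hy hα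

end IsContractible

end Contraction

section Counting

variable {χ : Formula P}

lemma numSub_pos (χ : Formula P) : 0 < numSub χ :=
  (Set.ncard_pos (subf_finite χ)).mpr ⟨χ, mem_subf_self χ⟩

lemma ncard_Cl_le (χ : Formula P) : (Cl χ).ncard ≤ 2 * numSub χ :=
  (Set.ncard_union_le _ _).trans (by
    have := Set.ncard_image_le (f := negc) (subf_finite χ)
    unfold numSub; omega)

def genSet (χ : Formula P) : Set (Formula P) :=
  subf χ ∪ (Formula.diaA '' Cl χ ∪ Formula.diaB '' Cl χ ∪
    Formula.diaBb '' Cl χ ∪ Formula.diaLb '' Cl χ)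

lemma genSet_finite (χ : Formula P) : (genSet χ).Finite :=
  (subf_finite χ).union ((((Cl_finite χ).image _).union ((Cl_finite χ).image _)).union
    ((Cl_finite χ).image _) |>.union ((Cl_finite χ).image _))

lemma ncard_genSet_le (χ : Formula P) : (genSet χ).ncard ≤ 9 * numSub χ := by
  have hCl := ncard_Cl_le χ
  have hA := Set.ncard_image_le (f := Formula.diaA) (Cl_finite χ)
  have hB := Set.ncard_image_le (f := Formula.diaB) (Cl_finite χ)
  have hBb := Set.ncard_image_le (f := Formula.diaBb) (Cl_finite χ)
  have hLb := Set.ncard_image_le (f := Formula.diaLb) (Cl_finite χ)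
  refine (Set.ncard_union_le _ _).trans ?_
  grw [Set.ncard_union_le, Set.ncard_union_le, Set.ncard_union_le]
  unfold numSub at *
  omega

lemma mem_Clp_cases {α : Formula P} (h : α ∈ Clp χ) :
    α ∈ genSet χ ∨ ∃ γ ∈ genSet χ, α = .neg γ := by
  rcases h with h | ⟨β, hβ, rfl | rfl | rfl | rfl | rfl | rfl | rfl | rfl⟩
  · rcases mem_Cl_cases h with h | ⟨γ, hγ, rfl⟩
    exacts [.inl (.inl h), .inr ⟨γ, .inl hγ, rfl⟩]
  all_goals simp [genSet, hβ]

lemma IsAtom.subset_of_inter_eq {F G : Set (Formula P)} (hF : IsAtom χ F) (hG : IsAtom χ G)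
    (h : F ∩ genSet χ = G ∩ genSet χ) : F ⊆ G := by
  intro α hα
  rcases mem_Clp_cases (hF.subset hα) with hgen | ⟨γ, hγ, rfl⟩
  · exact (show α ∈ G ∩ genSet χ from h ▸ ⟨hα, hgen⟩).1
  · have hγF : γ ∉ F := (hF.negCond _ (hF.subset hα)).mp hα
    have hγG : γ ∉ G := fun hγG => hγF (show γ ∈ F ∩ genSet χ from h ▸ ⟨hγG, hγ⟩).1
    exact (hG.negCond _ (hF.subset hα)).mpr hγG

def atoms (χ : Formula P) : Set (Set (Formula P)) := {F | IsAtom χ F}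

lemma injOn_inter_genSet : Set.InjOn (· ∩ genSet χ) (atoms χ) := fun _ hF _ hG h =>
  (hF.subset_of_inter_eq hG h).antisymm (hG.subset_of_inter_eq hF h.symm)

lemma atoms_finite (χ : Formula P) : (atoms χ).Finite :=
  Set.Finite.of_finite_image ((genSet_finite χ).powerset.subset
    (Set.image_subset_iff.mpr fun _ _ => Set.inter_subset_right)) injOn_inter_genSet

lemma ncard_atoms_le (χ : Formula P) : (atoms χ).ncard ≤ 2 ^ (9 * numSub χ) := by
  calc (atoms χ).ncard ≤ (genSet χ).powerset.ncard :=
        Set.ncard_le_ncard_of_injOn _ (fun _ _ => Set.inter_subset_right) injOn_inter_genSet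
          (genSet_finite χ).powerset
    _ = 2 ^ (genSet χ).ncard := Set.ncard_powerset _ (genSet_finite χ)
    _ ≤ 2 ^ (9 * numSub χ) := Nat.pow_le_pow_right two_pos (ncard_genSet_le χ)

end Counting

section Shrinking

variable {χ : Formula P} {N : ℕ} {L : ℕ → ℕ → Set (Formula P)}

def pastObs (χ : Formula P) (L : ℕ → ℕ → Set (Formula P)) (y : ℕ) : Set (Formula P) :=
  {ψ | ∃ u v, u < v ∧ v < y ∧ ψ ∈ Obs χ (L u v)}

lemma pastObs_subset_Cl (y : ℕ) : pastObs χ L y ⊆ Cl χ := fun _ ⟨_, _, _, _, h⟩ => h.2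

lemma pastObs_mono : Monotone (pastObs χ L) := fun _ _ hyy' _ ⟨u, v, huv, hv, h⟩ =>
  ⟨u, v, huv, hv.trans_le hyy', h⟩

lemma ncard_pastObs_le (y : ℕ) : (pastObs χ L y).ncard ≤ (Cl χ).ncard :=
  Set.ncard_le_ncard (pastObs_subset_Cl y) (Cl_finite χ)

lemma pastObs_succ_subset {y₀ y₁ : ℕ} (h : y₀ < y₁)
    (h₀ : (pastObs χ L y₀).ncard = (pastObs χ L y₁).ncard)
    (h₁ : (pastObs χ L (y₀ + 1)).ncard = (pastObs χ L (y₁ + 1)).ncard) :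
    pastObs χ L (y₁ + 1) ⊆ pastObs χ L y₀ := by
  have hfin (y) : (pastObs χ L y).Finite := (Cl_finite χ).subset (pastObs_subset_Cl y)
  have := Set.ncard_le_ncard (pastObs_mono (L := L) (show y₀ + 1 ≤ y₁ from h)) (hfin y₁)
  exact (Set.eq_of_subset_of_ncard_le (pastObs_mono (by omega)) (by omega) (hfin _)).ge

/-- Taking for each formula its lowest witness above row `y`, one column per formula suffices. -/
lemma exists_witness_columns (χ : Formula P) (L : ℕ → ℕ → Set (Formula P)) (y : ℕ) :
    ∃ K : Finset ℕ, K.card ≤ (Cl χ).ncard ∧ ∀ ψ u v, u < v → y < v → ψ ∈ Obs χ (L u v) →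
      ∃ u' v', u' < v' ∧ y < v' ∧ v' ≤ v ∧ ψ ∈ Obs χ (L u' v') ∧ u' ∈ K := by
  classical
  have hmin (ψ : Formula P) : ∃ u', ∀ u v, u < v → y < v → ψ ∈ Obs χ (L u v) →
      ∃ v', u' < v' ∧ y < v' ∧ v' ≤ v ∧ ψ ∈ Obs χ (L u' v') := by
    by_cases hψ : ∃ v, y < v ∧ ∃ u, u < v ∧ ψ ∈ Obs χ (L u v)
    · obtain ⟨hv, u', hu', hψu'⟩ := Nat.find_spec hψ
      exact ⟨u', fun u v huv hyv hψuv =>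
        ⟨Nat.find hψ, hu', hv, Nat.find_min' hψ ⟨hyv, u, huv, hψuv⟩, hψu'⟩⟩
    · exact ⟨0, fun u v huv hyv hψuv => absurd ⟨v, hyv, u, huv, hψuv⟩ hψ⟩
  choose w hw using hmin
  refine ⟨(Cl_finite χ).toFinset.image w,
    Finset.card_image_le.trans (Set.ncard_eq_toFinset_card _ _).ge, ?_⟩
  intro ψ u v huv hyv hψ
  obtain ⟨v', hwv', hyv', hv'v, hψ'⟩ := hw ψ u v huv hyv hψ
  exact ⟨w ψ, v', hwv', hyv', hv'v, hψ', Finset.mem_image_of_mem _ (by simpa using hψ.2)⟩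

lemma exists_mapsTo_subset_image {α β : Type*} [Nonempty β] {s : Set α} {t u : Set β}
    (hs : s.Finite) (ht : t.Finite) (htu : t ⊆ u) (hcard : t.ncard ≤ s.ncard)
    (hne : s.Nonempty → u.Nonempty) : ∃ g : α → β, Set.MapsTo g s u ∧ t ⊆ g '' s := by
  classical
  rcases s.eq_empty_or_nonempty with rfl | hsne
  · have : t = ∅ := (Set.ncard_eq_zero ht).mp (by simpa using hcard)
    exact ⟨fun _ => Classical.arbitrary β, Set.mapsTo_empty _ _, by simp [this]⟩
  obtain ⟨b, hb⟩ := hne hsne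
  have : Nonempty α := hsne.to_subtype.map Subtype.val
  obtain ⟨w, hwt, hw⟩ := ht.exists_injOn_of_encard_le (t := s)
    (by rwa [← ht.cast_ncard_eq, ← hs.cast_ncard_eq, Nat.cast_le])
  refine ⟨fun x => if x ∈ w '' t then Function.invFunOn w t x else b, fun x _ => ?_,
    fun y hy => ⟨w y, hwt hy, ?_⟩⟩
  · dsimp only
    split_ifs with h
    exacts [htu (Function.invFunOn_mem h), hb]
  · simp only [Set.mem_image_of_mem w hy, if_true]
    exact hw.leftInvOn_invFunOn hy

lemma exists_rowMap {y₀ y₁ c : ℕ} (hc : 0 < c)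
    (hcnt : ∀ F, min (cnt L y₀ F) c = min (cnt L y₁ F) c) (K : Finset ℕ) (hK : K.card ≤ c) :
    ∃ f : ℕ → ℕ, (∀ x < y₀, f x < y₁ ∧ L (f x) y₁ = L x y₀) ∧
      ∀ k ∈ K, k < y₁ → ∃ x < y₀, f x = k := by
  have hfib (F : Set (Formula P)) : ∃ g : ℕ → ℕ,
      Set.MapsTo g {x | x < y₀ ∧ L x y₀ = F} {x | x < y₁ ∧ L x y₁ = F} ∧
      {k | k ∈ K ∧ k < y₁ ∧ L k y₁ = F} ⊆ g '' {x | x < y₀ ∧ L x y₀ = F} := by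
    have hfin (y) : {x | x < y ∧ L x y = F}.Finite :=
      (Set.finite_lt_nat y).subset fun x hx => hx.1
    have htu : {k | k ∈ K ∧ k < y₁ ∧ L k y₁ = F} ⊆ {x | x < y₁ ∧ L x y₁ = F} :=
      fun k hk => hk.2
    have htK : {k | k ∈ K ∧ k < y₁ ∧ L k y₁ = F}.ncard ≤ K.card :=
      (Set.ncard_le_ncard (fun k hk => hk.1) K.finite_toSet).trans (Set.ncard_coe_finset K).le
    have htu' := Set.ncard_le_ncard htu (hfin y₁)
    have hF := hcnt F
    unfold cnt at hF
    refine exists_mapsTo_subset_image (hfin y₀) ((hfin y₁).subset htu) htu (by omega) fun hs => ?_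
    have := (Set.ncard_pos (hfin y₀)).mpr hs
    exact (Set.ncard_pos (hfin y₁)).mp (by omega)
  choose g hgmaps hgimage using hfib
  refine ⟨fun x => g (L x y₀) x, fun x hx => hgmaps _ ⟨hx, rfl⟩, fun k hk hky₁ => ?_⟩
  obtain ⟨x, ⟨hx, hxk⟩, hgx⟩ := hgimage (L k y₁) ⟨hk, hky₁, rfl⟩
  exact ⟨x, hx, by simp only [hxk, hgx]⟩

end Shrinking

section SmallModel

variable {χ : Formula P} {N : ℕ} {L : ℕ → ℕ → Set (Formula P)}

lemma IsPreCompass.cnt_eq_zero (hC : IsPreCompass χ N L) {y : ℕ} (hy : y < N)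
    {F : Set (Formula P)} (hF : ¬ IsAtom χ F) : cnt L y F = 0 := by
  have : {x | x < y ∧ L x y = F} = ∅ :=
    Set.eq_empty_of_forall_notMem fun x ⟨hx, hxF⟩ => hF (hxF ▸ hC.isAtom x y hx hy)
  rw [cnt, this, Set.ncard_empty]

noncomputable def rowData (χ : Formula P) (L : ℕ → ℕ → Set (Formula P)) (y : ℕ) :
    ℕ × ℕ × (atoms χ → ℕ) :=
  ((pastObs χ L y).ncard, (pastObs χ L (y + 1)).ncard, fun F => charFn χ L y F)

/-- One more than the number of possible values of `rowData χ L y`. -/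
noncomputable def smallBound (χ : Formula P) : ℕ :=
  ((Cl χ).ncard + 1) ^ 2 * (2 * numSub χ + 1) ^ (atoms χ).ncard + 1

lemma exists_rowData_eq (hN : smallBound χ < N) :
    ∃ y₀ y₁, 0 < y₀ ∧ y₀ < y₁ ∧ y₁ < N ∧ rowData χ L y₀ = rowData χ L y₁ := by
  classical
  have := (atoms_finite χ).fintype
  let t : Finset (ℕ × ℕ × (atoms χ → ℕ)) :=
    Finset.range ((Cl χ).ncard + 1) ×ˢ Finset.range ((Cl χ).ncard + 1) ×ˢ
      Fintype.piFinset fun _ => Finset.range (2 * numSub χ + 1)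
  have ht : t.card + 1 = smallBound χ := by
    rw [Finset.card_product, Finset.card_product, Fintype.card_piFinset, Finset.prod_const,
      Finset.card_range, Finset.card_range, Finset.card_univ, ← Nat.card_eq_fintype_card,
      Nat.card_coe_set_eq, smallBound, sq, mul_assoc]
  have hmaps : Set.MapsTo (rowData χ L) (Finset.Ioo 0 N) t := fun y _ => by
    simp only [t, rowData, charFn, Finset.coe_product, Set.mem_prod, Finset.mem_coe,
      Finset.mem_range, Fintype.mem_piFinset, Nat.lt_succ_iff, ncard_pastObs_le, min_le_right,
      implies_true, and_self]
  obtain ⟨y, hy, y', hy', hne, heq⟩ :=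
    Finset.exists_ne_map_eq_of_card_lt_of_maps_to (by simp; omega) hmaps
  rw [Finset.mem_Ioo] at hy hy'
  rcases hne.lt_or_gt with h | h
  exacts [⟨y, y', hy.1, h, hy'.2, heq⟩, ⟨y', y, hy'.1, h, hy.2, heq.symm⟩]

lemma exists_isContractible (hC : IsFinCompass χ N L) (hN : smallBound χ < N) :
    ∃ y₀ y₁ f, 0 < y₀ ∧ IsContractible χ N L y₀ y₁ f := by
  obtain ⟨y₀, y₁, hy₀, hy₀₁, hy₁, hdata⟩ := exists_rowData_eq hN
  simp only [rowData, Prod.mk.injEq] at hdata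
  obtain ⟨hpast, hpast_succ, hchar⟩ := hdata
  have hcnt (F : Set (Formula P)) :
      min (cnt L y₀ F) (2 * numSub χ) = min (cnt L y₁ F) (2 * numSub χ) := by
    by_cases hF : IsAtom χ F
    · exact congrFun hchar ⟨F, hF⟩
    · rw [hC.cnt_eq_zero (by omega) hF, hC.cnt_eq_zero hy₁ hF]
  obtain ⟨K, hK, hKwit⟩ := exists_witness_columns χ L y₁
  obtain ⟨f, hf, hfK⟩ := exists_rowMap (by have := numSub_pos χ; omega) hcnt K
    (hK.trans (ncard_Cl_le χ))
  refine ⟨y₀, y₁, f, hy₀, hC, hy₀₁, hy₁, hf, fun ψ u v huv hv hψ => ?_,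
    fun ψ u v huv hv hψ => ?_⟩
  · exact pastObs_succ_subset hy₀₁ hpast hpast_succ ⟨u, v, huv, by omega, hψ⟩
  · obtain ⟨u', v', hu'v', hv', hv'v, hψ', hu'K⟩ := hKwit ψ u v huv hv hψ
    refine ⟨u', v', hu'v', hv', hv'v, hψ', ?_⟩
    rcases lt_or_ge u' y₁ with hu' | hu'
    exacts [.inr (hfK u' hu'K hu'), .inl hu']

lemma exists_small_isFinCompass (hC : IsFinCompass χ N L) (hN : 1 < N) :
    ∃ N' L', 1 < N' ∧ N' ≤ smallBound χ ∧ IsFinCompass χ N' L' ∧ L' 0 1 = L 0 1 := by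
  induction N using Nat.strong_induction_on generalizing L with
  | _ N ih =>
    by_cases hsmall : N ≤ smallBound χ
    · exact ⟨N, L, hN, hsmall, hC, rfl⟩
    obtain ⟨y₀, y₁, f, hy₀, h⟩ := exists_isContractible hC (not_le.mp hsmall)
    have := h.lt
    have := h.lt_N
    obtain ⟨N', L', hN', hN'le, hC', hL'⟩ :=
      ih (N - (y₁ - y₀)) (by omega) h.isFinCompass (by omega)
    exact ⟨N', L', hN', hN'le, hC', hL'.trans (contract_of_le hy₀)⟩

end SmallModel

lemma numSub_xi_le (φ : Formula P) : numSub (xi φ) ≤ numSub φ + 6 := by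
  classical
  let S : Finset (Formula P) := {xi φ, (φ.or φ.diaBb).or φ.diaA, φ.or φ.diaBb, φ.diaBb, φ.diaA,
    φ.diaA.diaA}
  have hsub : subf (xi φ) ⊆ subf φ ∪ S := by
    simp only [xi, subf, Set.insert_subset_iff, Set.union_subset_iff, S, Finset.coe_insert,
      Finset.coe_singleton, Set.mem_union, Set.mem_insert_iff, Set.mem_singleton_iff, true_or,
      or_true, Set.subset_union_left, and_self]
  calc numSub (xi φ) ≤ (subf φ ∪ S).ncard :=
        Set.ncard_le_ncard hsub ((subf_finite φ).union S.finite_toSet)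
    _ ≤ numSub φ + S.card := (Set.ncard_union_le _ _).trans_eq (by rw [Set.ncard_coe_finset]; rfl)
    _ ≤ numSub φ + 6 := Nat.add_le_add_left Finset.card_le_six _

lemma smallBound_xi_le (φ : Formula P) :
    smallBound (xi φ) ≤
      (8 * numSub φ + 15) ^ (2 ^ (32 * numSub φ + 56)) * 2 ^ (32 * numSub φ + 56) := by
  set a := 8 * numSub φ + 15
  set X := 2 ^ (32 * numSub φ + 56)
  set A := (atoms (xi φ)).ncard
  have hn := numSub_xi_le φ
  have hn₀ := numSub_pos (xi φ)
  have hCl : (Cl (xi φ)).ncard + 1 ≤ a := by have := ncard_Cl_le (xi φ); omega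
  have hAX : A + 2 ≤ X :=
    calc A + 2 ≤ 2 ^ (9 * numSub (xi φ)) + 2 ^ (9 * numSub (xi φ)) :=
          Nat.add_le_add (ncard_atoms_le _) (Nat.pow_le_pow_right two_pos (by omega : 1 ≤ _))
      _ = 2 ^ (9 * numSub (xi φ) + 1) := by ring
      _ ≤ X := Nat.pow_le_pow_right two_pos (by omega)
  calc smallBound (xi φ) ≤ a ^ 2 * a ^ A + 1 := by
        unfold smallBound
        gcongr
        omega
    _ = a ^ (A + 2) + 1 := by ring
    _ ≤ a ^ X + a ^ X := Nat.add_le_add (Nat.pow_le_pow_right (by omega) (by omega))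
        (Nat.one_le_pow _ _ (by omega))
    _ ≤ X * a ^ X := by rw [← two_mul]; exact Nat.mul_le_mul_right _ (by omega)
    _ = a ^ X * X := mul_comm _ _

/-- An ABB̄L̄-formula `φ` is satisfied by some finite interval
structure iff `ξ = φ ∨ ⟨B̄⟩φ ∨ ⟨A⟩φ ∨ ⟨A⟩⟨A⟩φ` is featured at the initial point
`(0,1)` of some finite compass `ξ`-structure of size at most double exponential
in `|φ|`. -/
theorem finite_small_model {P : Type} (φ : Formula P) :
    (∃ (O : Type) (_ : LinearOrder O) (_ : Finite O)
       (σ : Interval O → Set P) (I : Interval O), sat σ φ I) ↔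
    (∃ (N : ℕ) (L : ℕ → ℕ → Set (Formula P)),
       1 < N ∧
       N ≤ (8 * numSub φ + 15) ^ (2 ^ (32 * numSub φ + 56)) * 2 ^ (32 * numSub φ + 56) ∧
       IsFinCompass (xi φ) N L ∧ xi φ ∈ L 0 1) := by
  constructor
  · rintro ⟨O, _, _, σ, I, hI⟩
    obtain ⟨N, L, hN, hC, hξ⟩ := exists_isFinCompass_of_sat hI
    obtain ⟨N', L', hN', hN'le, hC', hL'⟩ := exists_small_isFinCompass hC hN
    exact ⟨N', L', hN', hN'le.trans (smallBound_xi_le φ), hC', hL' ▸ hξ⟩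
  · rintro ⟨N, L, hN, -, hC, hξ⟩
    exact exists_sat_of_isFinCompass hN hC hξ

end ABBL
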